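/- arXiv:2410.01680 — 4 statements merged into one kernel-verified Lean document; each statement's English description precedes it below -/
import Mathlib

section
/- Let C ≥ 1 and let Σ be a real symmetric positive semidefinite C×C matrix with trace Σ > 0, with spectral decomposition Σ = U Λ Uᵀ where U is orthogonal and Λ is the diagonal matrix of (nonnegative) eigenvalues λ₁,…,λ_C. Let H be a normalized Hadamard matrix of size C. Set φ = √((1/C) · Σᵢ λᵢ), α = φ⁻¹ and R = H Uᵀ. Then R is an orthogonal matrix and every diagonal entry of the matrix α² · R Σ Rᵀ equals 1. -/
open Matrix

/-- PHI Standardization (Theorem 1 of the paper): for a symmetric PSD covariance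
matrix `S = U Λ Uᵀ` with positive trace and a normalized Hadamard matrix `H`,
the transform `R = H Uᵀ` is orthogonal and `α² R S Rᵀ` has unit diagonal,
where `α = φ⁻¹` and `φ = √((1/C) Σᵢ λᵢ)`. -/
theorem phi_s_standardization {C : ℕ} (hC : 1 ≤ C)
    (S : Matrix (Fin C) (Fin C) ℝ) (hSsymm : S.IsSymm) (hSpsd : S.PosSemidef)
    (htr : 0 < S.trace)
    (U : Matrix (Fin C) (Fin C) ℝ) (hU : U * Uᵀ = 1)
    (lam : Fin C → ℝ) (hlam : ∀ i, 0 ≤ lam i)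
    (hdecomp : S = U * Matrix.diagonal lam * Uᵀ)
    (H : Matrix (Fin C) (Fin C) ℝ) (hH : H * Hᵀ = 1)
    (hHent : ∀ i j, |H i j| = 1 / Real.sqrt C)
    (φ : ℝ) (hφ : φ = Real.sqrt ((1 / (C : ℝ)) * ∑ i, lam i))
    (α : ℝ) (hα : α = φ⁻¹)
    (R : Matrix (Fin C) (Fin C) ℝ) (hR : R = H * Uᵀ) :
    R * Rᵀ = 1 ∧ ∀ i : Fin C, (α ^ 2 • (R * S * Rᵀ)) i i = 1 := by
  have hCpos : (0 : ℝ) < C := by exact_mod_cast hC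
  have hUtU : Uᵀ * U = 1 := mul_eq_one_comm.mp hU
  have hRS : R * S * Rᵀ = H * Matrix.diagonal lam * Hᵀ := by
    subst hR hdecomp
    simp only [Matrix.transpose_mul, Matrix.transpose_transpose]
    calc H * Uᵀ * (U * Matrix.diagonal lam * Uᵀ) * (U * Hᵀ)
        = H * (Uᵀ * U) * Matrix.diagonal lam * (Uᵀ * U) * Hᵀ := by
          simp only [Matrix.mul_assoc]
      _ = H * Matrix.diagonal lam * Hᵀ := by
          rw [hUtU]; simp [Matrix.mul_assoc]
  have hRRT : R * Rᵀ = 1 := by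
    subst hR
    simp only [Matrix.transpose_mul, Matrix.transpose_transpose]
    calc H * Uᵀ * (U * Hᵀ) = H * (Uᵀ * U) * Hᵀ := by simp [Matrix.mul_assoc]
      _ = 1 := by rw [hUtU]; simpa using hH
  -- trace S = ∑ lam
  have htrS : S.trace = ∑ i, lam i := by
    rw [hdecomp, Matrix.trace_mul_cycle, hUtU, Matrix.one_mul, Matrix.trace_diagonal]
  have hsum : 0 < ∑ i, lam i := htrS ▸ htr
  have hq : (0:ℝ) < (1 / (C : ℝ)) * ∑ i, lam i := by positivity
  have hφpos : 0 < φ := hφ ▸ Real.sqrt_pos.mpr hq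
  have hφsq : φ ^ 2 = (1 / (C : ℝ)) * ∑ i, lam i := by
    rw [hφ, Real.sq_sqrt hq.le]
  refine ⟨hRRT, fun i => ?_⟩
  have hHsq : ∀ j, H i j * H i j = 1 / (C : ℝ) := by
    intro j
    have := hHent i j
    have h2 : (H i j) ^ 2 = (1 / Real.sqrt C) ^ 2 := by rw [← sq_abs, this]
    have : (H i j) ^ 2 = 1 / (C : ℝ) := by
      rw [h2, div_pow, one_pow, Real.sq_sqrt hCpos.le]
    simpa [sq] using this
  have hdiag : (R * S * Rᵀ) i i = (1 / (C : ℝ)) * ∑ j, lam j := by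
    rw [hRS]
    simp only [Matrix.mul_apply, Matrix.transpose_apply, Matrix.diagonal_apply,
      Finset.sum_mul, Finset.mul_sum]
    refine Finset.sum_congr rfl fun x _ => ?_
    rw [Finset.sum_eq_single x]
    · rw [show H i x * (if x = x then lam x else 0) * H i x
          = lam x * (H i x * H i x) by simp; ring, hHsq x]; ring
    · intro b _ hb; simp [hb]
    · simp
  have : α ^ 2 = ((1 / (C : ℝ)) * ∑ j, lam j)⁻¹ := by
    rw [hα, ← hφsq, inv_pow]
  simp only [Matrix.smul_apply, smul_eq_mul, hdiag, this]
  exact inv_mul_cancel₀ hq.ne'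
end

section
/- Let C ≥ 1, let Λ be a real diagonal C×C matrix with diagonal entries λ₁,…,λ_C, and let H be a real C×C matrix each of whose entries has absolute value 1/√C. Then for every index r, the r-th diagonal entry of H Λ Hᵀ equals (1/C) · Σᵢ λᵢ; in particular all diagonal entries of H Λ Hᵀ are equal. -/
open Matrix

/-- Conjugating a diagonal matrix `Λ` by a matrix all of whose entries have
absolute value `1/√C` spreads the total diagonal mass evenly: every diagonal
entry of `H Λ Hᵀ` equals `(1/C) Σᵢ λᵢ`; in particular all diagonal entries
are equal. -/
theorem hadamard_conjugation_diag {C : ℕ} (hC : 1 ≤ C) (lam : Fin C → ℝ)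
    (H : Matrix (Fin C) (Fin C) ℝ)
    (hHent : ∀ i j, |H i j| = 1 / Real.sqrt C) :
    (∀ r : Fin C, (H * Matrix.diagonal lam * Hᵀ) r r = (1 / (C : ℝ)) * ∑ i, lam i) ∧
    ∀ r r' : Fin C,
      (H * Matrix.diagonal lam * Hᵀ) r r = (H * Matrix.diagonal lam * Hᵀ) r' r' := by
  have hCpos : (0 : ℝ) < C := by exact_mod_cast hC
  have key : ∀ r : Fin C,
      (H * Matrix.diagonal lam * Hᵀ) r r = (1 / (C : ℝ)) * ∑ i, lam i := by
    intro r
    have hsq : ∀ j, H r j * H r j = 1 / (C : ℝ) := by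
      intro j
      have := hHent r j
      have h2 : H r j * H r j = |H r j| * |H r j| := (abs_mul_abs_self _).symm
      rw [h2, this]
      rw [div_mul_div_comm, one_mul, Real.mul_self_sqrt hCpos.le]
    simp only [Matrix.mul_apply, Matrix.diagonal_apply, Matrix.transpose_apply,
      mul_ite, mul_zero, ite_mul, zero_mul, Finset.sum_ite_eq', Finset.mem_univ, if_true]
    rw [Finset.mul_sum]
    apply Finset.sum_congr rfl
    intro j _
    rw [mul_comm (H r j) (lam j), mul_assoc, hsq j]
    ring
  exact ⟨key, fun r r' => by rw [key r, key r']⟩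
end

section
/- Let U be a real orthogonal C×C matrix, Λ a real diagonal C×C matrix with nonnegative diagonal entries λ₁,…,λ_C, and H a normalized Hadamard matrix of size C. Let δ > 0 and let Δ_r = ±δ·e_r be δ times a signed standard basis vector of ℝ^C. Then ‖(U Λ^{1/2} Hᵀ) Δ_r‖ = δ · √((1/C) · Σ_{c=1}^C λ_c) for every index r ∈ {1,…,C} and every choice of sign; in particular this magnitude is the same for all coordinates r. -/
open Matrix

/-- Uniform error profile of Hadamard whitening: an error of size `δ` along any
single (signed) coordinate direction in whitened space maps under the
denormalization `U Λ^{1/2} Hᵀ` to a vector of magnitude `δ √((1/C) Σ_c λ_c)`,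
independently of the coordinate and the sign. -/
theorem hadamard_uniform_error {C : ℕ} (hC : 1 ≤ C)
    (U : Matrix (Fin C) (Fin C) ℝ) (hU : U * Uᵀ = 1)
    (lam : Fin C → ℝ) (hlam : ∀ i, 0 ≤ lam i)
    (H : Matrix (Fin C) (Fin C) ℝ) (hH : H * Hᵀ = 1)
    (hHent : ∀ i j, |H i j| = 1 / Real.sqrt C)
    (δ : ℝ) (hδ : 0 < δ) :
    ∀ (r : Fin C) (s : ℝ), s = 1 ∨ s = -1 →
      Real.sqrt (∑ i,
          ((U * (Matrix.diagonal fun i => Real.sqrt (lam i)) * Hᵀ).mulVec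
            (fun i => if i = r then s * δ else 0) i) ^ 2)
        = δ * Real.sqrt ((1 / (C : ℝ)) * ∑ c, lam c) := by
  intro r s hs
  set A := U * (Matrix.diagonal fun i => Real.sqrt (lam i)) * Hᵀ with hA
  have hmul : ∀ i, A.mulVec (fun i => if i = r then s * δ else 0) i
      = A i r * (s * δ) := by
    intro i
    simp [Matrix.mulVec, dotProduct]
  have hs2 : s ^ 2 = 1 := by rcases hs with h | h <;> simp [h]
  have hsum : ∑ i, (A.mulVec (fun i => if i = r then s * δ else 0) i) ^ 2
      = δ ^ 2 * ∑ i, (A i r) ^ 2 := by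
    simp only [hmul]
    rw [Finset.mul_sum]
    congr 1; funext i; rw [mul_pow, mul_pow, hs2]; ring
  -- ∑ i, (A i r)^2 = (Aᵀ * A) r r
  have hAtA : Aᵀ * A = H * Matrix.diagonal lam * Hᵀ := by
    have hUtU : Uᵀ * U = 1 := mul_eq_one_comm.mp hU
    have hDD : (Matrix.diagonal fun i => Real.sqrt (lam i)) *
        (Matrix.diagonal fun i => Real.sqrt (lam i)) = Matrix.diagonal lam := by
      rw [Matrix.diagonal_mul_diagonal]
      exact congrArg _ (funext fun i => Real.mul_self_sqrt (hlam i))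
    calc Aᵀ * A = Hᵀᵀ * ((Matrix.diagonal fun i => Real.sqrt (lam i))ᵀ
          * ((Uᵀ * U) * ((Matrix.diagonal fun i => Real.sqrt (lam i)) * Hᵀ))) := by
          simp [hA, Matrix.transpose_mul, Matrix.mul_assoc]
      _ = H * Matrix.diagonal lam * Hᵀ := by
          rw [hUtU, Matrix.one_mul, Matrix.transpose_transpose,
            Matrix.diagonal_transpose,
            ← Matrix.mul_assoc (Matrix.diagonal fun i => Real.sqrt (lam i)), hDD,
            ← Matrix.mul_assoc]
  have hcol : ∑ i, (A i r) ^ 2 = (1 / (C : ℝ)) * ∑ c, lam c := by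
    have h1 : ∑ i, (A i r) ^ 2 = (Aᵀ * A) r r := by
      simp [Matrix.mul_apply, sq, Matrix.transpose_apply]
    rw [h1, hAtA]
    have h2 : (H * Matrix.diagonal lam * Hᵀ) r r = ∑ c, H r c * lam c * H r c := by
      simp [Matrix.mul_apply, Matrix.diagonal, Finset.sum_mul]
    rw [h2, Finset.mul_sum]
    congr 1; funext c
    have hsq : H r c * H r c = 1 / (C : ℝ) := by
      have := hHent r c
      have h3 : H r c * H r c = |H r c| * |H r c| := (abs_mul_abs_self _).symm
      rw [h3, this]
      have hCpos : (0:ℝ) < C := by exact_mod_cast Nat.lt_of_lt_of_le Nat.zero_lt_one hC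
      rw [div_mul_div_comm, one_mul, Real.mul_self_sqrt hCpos.le]
    calc H r c * lam c * H r c = (H r c * H r c) * lam c := by ring
      _ = 1 / (C : ℝ) * lam c := by rw [hsq]
  rw [hsum, hcol, Real.sqrt_mul (sq_nonneg δ), Real.sqrt_sq hδ.le]
end

section
/- Let Σ be a real symmetric positive semidefinite C×C matrix with trace Σ > 0 and spectral decomposition Σ = U Λ Uᵀ (U orthogonal, Λ diagonal), let H be a normalized Hadamard matrix of size C, and set φ = √((1/C) · trace Σ). Then the PHI-S normalization matrix W = φ⁻¹ H Uᵀ is invertible with W⁻¹ = φ U Hᵀ, and for every vector ε ∈ ℝ^C, ‖W⁻¹ ε‖ = φ · ‖ε‖; i.e. PHI-S denormalization scales every error vector isotropically by the single constant φ. -/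
open Matrix


lemma aux_orth_pres {n : ℕ} (A : Matrix (Fin n) (Fin n) ℝ) (hA : Aᵀ * A = 1)
    (v : Fin n → ℝ) : ∑ i, (A.mulVec v i) ^ 2 = ∑ i, (v i) ^ 2 := by
  have h1 : A.mulVec v ⬝ᵥ A.mulVec v = v ⬝ᵥ (Aᵀ * A).mulVec v := by
    rw [← Matrix.mulVec_mulVec, Matrix.dotProduct_mulVec, Matrix.mulVec_transpose,
      dotProduct_comm]
  rw [hA, Matrix.one_mulVec] at h1
  simpa [dotProduct, sq] using h1

/-- The PHI-S normalization matrix `W = φ⁻¹ H Uᵀ` is invertible with inverse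
`W⁻¹ = φ U Hᵀ`, and the denormalization scales every error vector
isotropically: `‖W⁻¹ ε‖ = φ ‖ε‖`. -/
theorem phi_s_isotropic_denorm {C : ℕ} (hC : 1 ≤ C)
    (S : Matrix (Fin C) (Fin C) ℝ) (hSsymm : S.IsSymm) (hSpsd : S.PosSemidef)
    (htr : 0 < S.trace)
    (U : Matrix (Fin C) (Fin C) ℝ) (hU : U * Uᵀ = 1)
    (lam : Fin C → ℝ) (hdecomp : S = U * Matrix.diagonal lam * Uᵀ)
    (H : Matrix (Fin C) (Fin C) ℝ) (hH : H * Hᵀ = 1)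
    (hHent : ∀ i j, |H i j| = 1 / Real.sqrt C)
    (φ : ℝ) (hφ : φ = Real.sqrt ((1 / (C : ℝ)) * S.trace))
    (W : Matrix (Fin C) (Fin C) ℝ) (hW : W = φ⁻¹ • (H * Uᵀ)) :
    W * (φ • (U * Hᵀ)) = 1 ∧ (φ • (U * Hᵀ)) * W = 1 ∧
    ∀ ε : Fin C → ℝ,
      Real.sqrt (∑ i, ((φ • (U * Hᵀ)).mulVec ε i) ^ 2)
        = φ * Real.sqrt (∑ i, (ε i) ^ 2) := by
  have hCpos : (0 : ℝ) < C := by exact_mod_cast Nat.lt_of_lt_of_le Nat.zero_lt_one hC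
  have hφpos : 0 < φ := by
    rw [hφ]
    exact Real.sqrt_pos.mpr (by positivity)
  have hφne : φ ≠ 0 := ne_of_gt hφpos
  -- orthogonality consequences
  have hU' : Uᵀ * U = 1 := mul_eq_one_comm.mp hU
  have hH' : Hᵀ * H = 1 := mul_eq_one_comm.mp hH
  have hM : (U * Hᵀ)ᵀ * (U * Hᵀ) = 1 := by
    rw [transpose_mul, transpose_transpose]
    rw [mul_assoc, ← mul_assoc Uᵀ, hU', one_mul, hH]
  have hM' : (H * Uᵀ) * (U * Hᵀ) = 1 := by
    rw [mul_assoc, ← mul_assoc Uᵀ, hU', one_mul, hH]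
  have hM'' : (U * Hᵀ) * (H * Uᵀ) = 1 := by
    rw [mul_assoc, ← mul_assoc Hᵀ, hH', one_mul, hU]
  have h1 : W * (φ • (U * Hᵀ)) = 1 := by
    rw [hW, Matrix.smul_mul, Matrix.mul_smul, smul_smul, inv_mul_cancel₀ hφne,
      one_smul, hM']
  have h2 : (φ • (U * Hᵀ)) * W = 1 := by
    rw [hW, Matrix.smul_mul, Matrix.mul_smul, smul_smul, mul_inv_cancel₀ hφne,
      one_smul, hM'']
  refine ⟨h1, h2, fun ε => ?_⟩
  set M := U * Hᵀ with hMdef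
  have hpres : ∑ i, (M.mulVec ε i) ^ 2 = ∑ i, (ε i) ^ 2 := aux_orth_pres M hM ε
  have hsmul : ∀ i, (φ • M).mulVec ε i = φ * M.mulVec ε i := by
    intro i; simp [smul_mulVec]
  calc Real.sqrt (∑ i, ((φ • M).mulVec ε i) ^ 2)
      = Real.sqrt (φ ^ 2 * ∑ i, (M.mulVec ε i) ^ 2) := by
        congr 1; rw [Finset.mul_sum]; exact Finset.sum_congr rfl fun i _ => by
          rw [hsmul]; ring
    _ = φ * Real.sqrt (∑ i, (ε i) ^ 2) := by
        rw [hpres, Real.sqrt_mul (by positivity), Real.sqrt_sq hφpos.le]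
end
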